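/- If v : ℝ³ → ℝ³ is a homogeneous vector-valued polynomial of degree q+1 such that x · v(x) = 0 for all x, then v belongs to the Nédélec space ND_q = [P_q]³ + x × [P_q]³, where [P_q]³ denotes vector polynomials of degree at most q. -/

import Mathlib

/-!
Write `v = eval ∘ p` with `p` a triple of homogeneous polynomials of degree `q + 1`. For any
polynomial triple, expanding the cross product gives `x × curl p = ∇(x · p) - p - (x · ∇) p`.
Here `x · p = 0` as a polynomial and `(x · ∇) p = (q + 1) p` by Euler's identity, so
`x × curl p = -(q + 2) p`. Thus `v = x × w` with `w = -(q + 2)⁻¹ curl p`, whose components are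
homogeneous of degree `q`.
-/

open Matrix

/-- `v` is a vector-valued polynomial map with each component of total degree at most `q`. -/
def IsPolyMapDeg (q : ℕ) (v : (Fin 3 → ℝ) → Fin 3 → ℝ) : Prop :=
  ∃ p : Fin 3 → MvPolynomial (Fin 3) ℝ,
    (∀ i, (p i).totalDegree ≤ q) ∧ ∀ x i, v x i = MvPolynomial.eval x (p i)

/-- `v` is a vector-valued polynomial map with each component homogeneous of degree `d`. -/
def IsHomogPolyMap (d : ℕ) (v : (Fin 3 → ℝ) → Fin 3 → ℝ) : Prop :=
  ∃ p : Fin 3 → MvPolynomial (Fin 3) ℝ,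
    (∀ i, (p i).IsHomogeneous d) ∧ ∀ x i, v x i = MvPolynomial.eval x (p i)

/-- Membership in the Nédélec space `ND_q = [P_q]³ + x × [P_q]³`. -/
def MemNedelec (q : ℕ) (v : (Fin 3 → ℝ) → Fin 3 → ℝ) : Prop :=
  ∃ v₁ v₂, IsPolyMapDeg q v₁ ∧ IsPolyMapDeg q v₂ ∧ ∀ x, v x = v₁ x + x ⨯₃ (v₂ x)

open MvPolynomial

theorem RingHom.map_cross {R S : Type*} [CommRing R] [CommRing S] (f : R →+* S)
    (u v : Fin 3 → R) : f ∘ (u ⨯₃ v) = (f ∘ u) ⨯₃ (f ∘ v) := by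
  ext i
  fin_cases i <;> simp [cross_apply]

namespace MvPolynomial

variable {R : Type*} [CommRing R]

noncomputable def curl (p : Fin 3 → MvPolynomial (Fin 3) R) : Fin 3 → MvPolynomial (Fin 3) R :=
  ![pderiv 1 (p 2) - pderiv 2 (p 1), pderiv 2 (p 0) - pderiv 0 (p 2),
    pderiv 0 (p 1) - pderiv 1 (p 0)]

theorem IsHomogeneous.curl {n : ℕ} {p : Fin 3 → MvPolynomial (Fin 3) R}
    (hp : ∀ i, (p i).IsHomogeneous n) (i : Fin 3) : (curl p i).IsHomogeneous (n - 1) := by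
  fin_cases i <;> exact ((hp _).pderiv).sub ((hp _).pderiv)

theorem X_cross_curl (p : Fin 3 → MvPolynomial (Fin 3) R) :
    X ⨯₃ curl p = fun i => pderiv i (X ⬝ᵥ p) - p i - ∑ j, X j * pderiv j (p i) := by
  ext1 i
  fin_cases i <;>
    simp [cross_apply, curl, dotProduct, Fin.sum_univ_three, pderiv_X] <;>
    ring

theorem X_cross_curl_of_isHomogeneous {n : ℕ} {p : Fin 3 → MvPolynomial (Fin 3) R}
    (hp : ∀ i, (p i).IsHomogeneous n) (horth : X ⬝ᵥ p = 0) :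
    X ⨯₃ curl p = -((n + 1 : R) • p) := by
  rw [X_cross_curl, horth]
  ext1 i
  simp only [map_zero, (hp i).sum_X_mul_pderiv, Pi.neg_apply, Pi.smul_apply, nsmul_eq_mul,
    smul_eq_C_mul, map_add, map_natCast, map_one]
  ring

theorem eq_X_cross_smul_curl {K : Type*} [Field K] [CharZero K] {n : ℕ}
    {p : Fin 3 → MvPolynomial (Fin 3) K} (hp : ∀ i, (p i).IsHomogeneous n)
    (horth : X ⬝ᵥ p = 0) : p = X ⨯₃ (-(n + 1 : K)⁻¹ • curl p) := by
  have hn : (n + 1 : K) ≠ 0 := Nat.cast_add_one_ne_zero n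
  rw [LinearMap.map_smul_of_tower, X_cross_curl_of_isHomogeneous hp horth, smul_neg, neg_smul,
    neg_neg, smul_smul, inv_mul_cancel₀ hn, one_smul]

end MvPolynomial

theorem homog_orthogonal_mem_Nedelec (q : ℕ) (v : (Fin 3 → ℝ) → Fin 3 → ℝ)
    (hv : IsHomogPolyMap (q + 1) v) (horth : ∀ x, x ⬝ᵥ v x = 0) :
    MemNedelec q v := by
  obtain ⟨p, hp, hpv⟩ := hv
  have eval_comp_X (x : Fin 3 → ℝ) : eval x ∘ X = x := funext fun _ => by simp
  have hvp (x : Fin 3 → ℝ) : v x = eval x ∘ p := funext (hpv x)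
  have hXp : (X ⬝ᵥ p : MvPolynomial (Fin 3) ℝ) = 0 := MvPolynomial.funext fun x => by
    rw [(eval x).map_dotProduct, eval_comp_X, ← hvp, horth, map_zero]
  set w := -((q + 1 : ℕ) + 1 : ℝ)⁻¹ • curl p
  refine ⟨0, fun x => eval x ∘ w, ⟨0, fun _ => by simp, fun _ _ => by simp⟩,
    ⟨w, fun i => ?_, fun _ _ => rfl⟩, fun x => ?_⟩
  · simp only [w, Pi.smul_apply, smul_eq_C_mul]
    exact ((IsHomogeneous.curl hp i).C_mul _).totalDegree_le
  · rw [hvp, eq_X_cross_smul_curl hp hXp, (eval x).map_cross, eval_comp_X, Pi.zero_apply,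
      zero_add]
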